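/- arXiv:2605.29080 — 2 statements merged into one kernel-verified Lean document; each statement's English description precedes it below -/
import Mathlib

section
/- Let H(A, B) be an (ε, δ)-super-regular pair with density d ≥ δ. Suppose 0 ≤ s ≤ ε²|A| and 0 ≤ t ≤ ε²|B|, and S_A = {v₁, …, v_s}, S_B = {u₁, …, u_t} are vertex sets disjoint from A and B respectively, such that deg(v, B) ≥ d|B| for every v ∈ S_A and deg(u, A) ≥ d|A| for every u ∈ S_B. Then the pair H'(A ∪ S_A, B ∪ S_B) is (3ε, δ − ε)-super-regular with density d' = d ± ε. -/
open Finset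
open scoped Classical

variable {V : Type*}

/-- Number of neighbors of `v` inside the finite set `S`. -/
noncomputable def degIn (G : SimpleGraph V) (v : V) (S : Finset V) : ℕ :=
  (S.filter fun u => G.Adj v u).card

/-- Number of ordered adjacent pairs between `A` and `B`. -/
noncomputable def eCount (G : SimpleGraph V) (A B : Finset V) : ℕ :=
  ((A ×ˢ B).filter fun p => G.Adj p.1 p.2).card

/-- Bipartite density of the pair `(A, B)`. -/
noncomputable def dens (G : SimpleGraph V) (A B : Finset V) : ℝ :=
  (eCount G A B : ℝ) / ((A.card : ℝ) * B.card)

/-- `(A, B)` is an `ε`-regular pair in `G`. -/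
def IsRegularPair (G : SimpleGraph V) (ε : ℝ) (A B : Finset V) : Prop :=
  ∀ X ⊆ A, ∀ Y ⊆ B, ε * A.card ≤ X.card → ε * B.card ≤ Y.card →
    |dens G A B - dens G X Y| ≤ ε

/-- `(A, B)` is an `(ε, δ)`-super-regular pair in `G`. -/
def IsSuperRegularPair (G : SimpleGraph V) (ε δ : ℝ) (A B : Finset V) : Prop :=
  IsRegularPair G ε A B ∧
    (∀ a ∈ A, δ * B.card ≤ (degIn G a B : ℝ)) ∧
    (∀ b ∈ B, δ * A.card ≤ (degIn G b A : ℝ))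


/-!
Throwing away a `(1 - η)`-proportion of each side of a pair moves its density by at most `2η`
(`Rel.abs_edgeDensity_sub_edgeDensity_le_two_mul`). The at most `ε²|A|` new vertices form an
`ε/2`-proportion of `A ∪ S_A`, and an `ε/3`-proportion of any `X` with `|X| ≥ 3ε|A ∪ S_A|`, so the
density of the enlarged pair is `d ± ε`, and that of `(X, Y)` is within `2ε/3` of that of
`(X ∩ A, Y ∩ B)`, which `ε`-regularity puts within `ε` of `d`. Minimum degrees drop from `δ|B|` to
at least `(δ - ε)|B ∪ S_B|` because `δ|S_B| ≤ ε²|B| ≤ ε|B|`.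
-/

lemma dens_eq_edgeDensity (G : SimpleGraph V) (A B : Finset V) :
    dens G A B = (Rel.edgeDensity G.Adj A B : ℝ) := by
  simp [_root_.dens, eCount, Rel.edgeDensity, Rel.interedges]

lemma dens_le_one (G : SimpleGraph V) (A B : Finset V) : dens G A B ≤ 1 := by
  rw [dens_eq_edgeDensity]
  exact_mod_cast Rel.edgeDensity_le_one G.Adj A B

lemma abs_dens_sub_dens_le_two_mul (G : SimpleGraph V) {A B A' B' : Finset V} (hA : A ⊆ A')
    (hB : B ⊆ B') {η : ℝ} (hη : 0 ≤ η) (hAcard : (1 - η) * #A' ≤ #A)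
    (hBcard : (1 - η) * #B' ≤ #B) :
    |dens G A B - dens G A' B'| ≤ 2 * η := by
  rw [dens_eq_edgeDensity, dens_eq_edgeDensity]
  exact Rel.abs_edgeDensity_sub_edgeDensity_le_two_mul G.Adj hA hB hη hAcard hBcard

lemma one_sub_half_mul_card_union_le {A S : Finset V} {ε : ℝ} (hε0 : 0 ≤ ε) (hε1 : ε ≤ 1)
    (hS : (#S : ℝ) ≤ ε ^ 2 * #A) :
    (1 - ε / 2) * #(A ∪ S) ≤ #A := by
  have hunion : (#(A ∪ S) : ℝ) ≤ #A + #S := by exact_mod_cast card_union_le A S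
  have hε2 : 0 ≤ 1 - ε / 2 := by linarith
  nlinarith [mul_nonneg hε2 (sub_nonneg.2 hunion), mul_nonneg hε2 (sub_nonneg.2 hS),
    mul_nonneg (mul_nonneg hε0 (sq_nonneg (1 - ε))) (Nat.cast_nonneg (α := ℝ) #A)]

lemma one_sub_mul_card_le_card_inter {X A S : Finset V} (hX : X ⊆ A ∪ S) {η : ℝ}
    (hS : (#S : ℝ) ≤ η * #X) :
    (1 - η) * #X ≤ #(X ∩ A) := by
  have hsdiff : X \ A ⊆ S := fun x hx => by
    rw [mem_sdiff] at hx
    exact (mem_union.1 (hX hx.1)).resolve_left hx.2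
  have hsplit : (#(X ∩ A) : ℝ) + #(X \ A) = #X := by exact_mod_cast card_inter_add_card_sdiff X A
  have hrest : (#(X \ A) : ℝ) ≤ #S := by exact_mod_cast card_le_card hsdiff
  linarith

lemma abs_dens_union_sub_dens_le (G : SimpleGraph V) {A B S T : Finset V} {ε : ℝ}
    (hε0 : 0 ≤ ε) (hε1 : ε ≤ 1) (hS : (#S : ℝ) ≤ ε ^ 2 * #A) (hT : (#T : ℝ) ≤ ε ^ 2 * #B) :
    |dens G (A ∪ S) (B ∪ T) - dens G A B| ≤ ε := by
  rw [abs_sub_comm]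
  convert abs_dens_sub_dens_le_two_mul G subset_union_left subset_union_left (by positivity)
    (one_sub_half_mul_card_union_le hε0 hε1 hS) (one_sub_half_mul_card_union_le hε0 hε1 hT)
    using 1
  ring

lemma IsRegularPair.union {G : SimpleGraph V} {ε : ℝ} {A B S T : Finset V}
    (hreg : IsRegularPair G ε A B) (hε0 : 0 ≤ ε) (hε1 : ε ≤ 1)
    (hS : (#S : ℝ) ≤ ε ^ 2 * #A) (hT : (#T : ℝ) ≤ ε ^ 2 * #B) :
    IsRegularPair G (3 * ε) (A ∪ S) (B ∪ T) := by
  intro X hX Y hY hXcard hYcard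
  have hA : (#A : ℝ) ≤ #(A ∪ S) := by exact_mod_cast card_le_card subset_union_left
  have hB : (#B : ℝ) ≤ #(B ∪ T) := by exact_mod_cast card_le_card subset_union_left
  have hXA : (1 - ε / 3) * #X ≤ #(X ∩ A) := one_sub_mul_card_le_card_inter hX (by nlinarith)
  have hYB : (1 - ε / 3) * #Y ≤ #(Y ∩ B) := one_sub_mul_card_le_card_inter hY (by nlinarith)
  have hunion := abs_dens_union_sub_dens_le G hε0 hε1 hS hT
  have hold : |dens G A B - dens G (X ∩ A) (Y ∩ B)| ≤ ε :=
    hreg _ inter_subset_right _ inter_subset_right (by nlinarith) (by nlinarith)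
  have hinner : |dens G (X ∩ A) (Y ∩ B) - dens G X Y| ≤ 2 * (ε / 3) :=
    abs_dens_sub_dens_le_two_mul G inter_subset_left inter_subset_left (by positivity) hXA hYB
  calc |dens G (A ∪ S) (B ∪ T) - dens G X Y|
      ≤ |dens G (A ∪ S) (B ∪ T) - dens G A B| + |dens G A B - dens G X Y| := abs_sub_le _ _ _
    _ ≤ |dens G (A ∪ S) (B ∪ T) - dens G A B| + (|dens G A B - dens G (X ∩ A) (Y ∩ B)|
          + |dens G (X ∩ A) (Y ∩ B) - dens G X Y|) := by gcongr; exact abs_sub_le _ _ _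
    _ ≤ 3 * ε := by linarith

lemma mul_card_le_degIn_of_mem_union {G : SimpleGraph V} {X S Y : Finset V} {δ d : ℝ}
    (hδd : δ ≤ d) (hX : ∀ v ∈ X, δ * #Y ≤ degIn G v Y) (hS : ∀ v ∈ S, d * #Y ≤ degIn G v Y) :
    ∀ v ∈ X ∪ S, δ * #Y ≤ degIn G v Y := by
  intro v hv
  rcases mem_union.1 hv with hvX | hvS
  · exact hX v hvX
  · exact (mul_le_mul_of_nonneg_right hδd (Nat.cast_nonneg _)).trans (hS v hvS)

lemma sub_mul_card_union_le_degIn {G : SimpleGraph V} {v : V} {B T : Finset V} {δ ε : ℝ}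
    (hv : δ * #B ≤ degIn G v B) (hδ : δ ≤ 1) (hε0 : 0 ≤ ε) (hε1 : ε ≤ 1)
    (hT : (#T : ℝ) ≤ ε ^ 2 * #B) :
    (δ - ε) * #(B ∪ T) ≤ degIn G v (B ∪ T) := by
  have hmono : (degIn G v B : ℝ) ≤ degIn G v (B ∪ T) := by
    exact_mod_cast card_le_card (filter_subset_filter _ subset_union_left)
  have hunion : (#(B ∪ T) : ℝ) ≤ #B + #T := by exact_mod_cast card_union_le B T
  have hB : (#B : ℝ) ≤ #(B ∪ T) := by exact_mod_cast card_le_card subset_union_left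
  nlinarith [mul_nonneg (sub_nonneg.2 hδ) (sub_nonneg.2 hB), mul_nonneg hε0 (sub_nonneg.2 hB),
    mul_nonneg (mul_nonneg hε0 (sub_nonneg.2 hε1)) (Nat.cast_nonneg (α := ℝ) #B)]

theorem stmt2_general (G : SimpleGraph V) (ε δ d : ℝ) (hε0 : 0 < ε) (hε1 : ε < 1)
    (A B S_A S_B : Finset V)
    (hsr : IsSuperRegularPair G ε δ A B)
    (hd : dens G A B = d) (hδd : δ ≤ d)
    (hs : (S_A.card : ℝ) ≤ ε ^ 2 * A.card) (ht : (S_B.card : ℝ) ≤ ε ^ 2 * B.card)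
    (hdegA : ∀ v ∈ S_A, d * B.card ≤ (degIn G v B : ℝ))
    (hdegB : ∀ u ∈ S_B, d * A.card ≤ (degIn G u A : ℝ)) :
    IsSuperRegularPair G (3 * ε) (δ - ε) (A ∪ S_A) (B ∪ S_B) ∧
    |dens G (A ∪ S_A) (B ∪ S_B) - d| ≤ ε := by
  obtain ⟨hreg, hdegA', hdegB'⟩ := hsr
  have hδ1 : δ ≤ 1 := hδd.trans (hd ▸ dens_le_one G A B)
  refine ⟨⟨hreg.union hε0.le hε1.le hs ht, fun v hv => ?_, fun u hu => ?_⟩,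
    hd ▸ abs_dens_union_sub_dens_le G hε0.le hε1.le hs ht⟩
  · exact sub_mul_card_union_le_degIn
      (mul_card_le_degIn_of_mem_union hδd hdegA' hdegA v hv) hδ1 hε0.le hε1.le ht
  · exact sub_mul_card_union_le_degIn
      (mul_card_le_degIn_of_mem_union hδd hdegB' hdegB u hu) hδ1 hε0.le hε1.le hs

/-- Inserting a few high-degree vertices into a super-regular pair. -/
theorem stmt2 (G : SimpleGraph V) (ε δ d : ℝ) (hε0 : 0 < ε) (hε1 : ε < 1) (hδ : 0 < δ)
    (A B S_A S_B : Finset V)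
    (hsr : IsSuperRegularPair G ε δ A B)
    (hd : dens G A B = d) (hδd : δ ≤ d)
    (hdisjA : Disjoint S_A A) (hdisjB : Disjoint S_B B)
    (hs : (S_A.card : ℝ) ≤ ε ^ 2 * A.card) (ht : (S_B.card : ℝ) ≤ ε ^ 2 * B.card)
    (hdegA : ∀ v ∈ S_A, d * B.card ≤ (degIn G v B : ℝ))
    (hdegB : ∀ u ∈ S_B, d * A.card ≤ (degIn G u A : ℝ)) :
    IsSuperRegularPair G (3 * ε) (δ - ε) (A ∪ S_A) (B ∪ S_B) ∧
    |dens G (A ∪ S_A) (B ∪ S_B) - d| ≤ ε :=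
  stmt2_general G ε δ d hε0 hε1 A B S_A S_B hsr hd hδd hs ht hdegA hdegB
end

section
/- Let G = (V, E) be a γ-non-extremal graph on n vertices (0 < γ < 1/4) with minimum degree δ(G) ≥ (1/2 − ν)n, where ν ≪ γ. Let v ∈ V satisfy deg(v) ≤ n/2 + γn/2, and let S_v = {u ∈ V : deg(u, V ∖ N(v)) < γn/2}. Then |S_v| ≤ n/2 − γn/2. -/
open Finset
open scoped Classical

variable {V : Type*}

/-- `G` is `γ`-non-extremal: every pair of (not necessarily disjoint) vertex subsets of
size `⌊n/2⌋` spans more than `γ n²` edges. -/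
def NonExtremal [Fintype V] (G : SimpleGraph V) (γ : ℝ) : Prop :=
  ∀ A B : Finset V, A.card = Fintype.card V / 2 → B.card = Fintype.card V / 2 →
    γ * (Fintype.card V : ℝ) ^ 2 < (eCount G A B : ℝ)

lemma eCount_eq_sum (G : SimpleGraph V) (A B : Finset V) :
    eCount G A B = ∑ a ∈ A, degIn G a B := by
  classical
  unfold eCount degIn
  rw [Finset.card_filter, Finset.sum_product]
  congr 1
  ext a
  rw [Finset.card_filter]

set_option maxHeartbeats 1000000 in
theorem stmt3 [Fintype V] (G : SimpleGraph V) (n : ℕ) (hn : Fintype.card V = n)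
    (γ ν : ℝ) (hγ0 : 0 < γ) (hγ : γ < 1 / 4) (hν0 : 0 < ν) (hνγ : ν ≤ γ / 50)
    (hne : NonExtremal G γ)
    (hmin : ∀ v : V, (1 / 2 - ν) * n ≤ (degIn G v univ : ℝ))
    (v : V) (hv : (degIn G v univ : ℝ) ≤ n / 2 + γ * n / 2) :
    ((univ.filter fun u =>
        (degIn G u (univ.filter fun w => ¬ G.Adj v w) : ℝ) < γ * n / 2).card : ℝ)
      ≤ n / 2 - γ * n / 2 := by
  classical
  set M : Finset V := univ.filter fun w => ¬ G.Adj v w with hM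
  set S : Finset V := univ.filter fun u => (degIn G u M : ℝ) < γ * n / 2 with hS
  by_contra hcon
  push_neg at hcon
  -- hcon : n/2 - γn/2 < S.card
  have hn0 : 0 < n := by
    by_contra h
    push_neg at h
    interval_cases n
    have : S.card ≤ Fintype.card V := by
      simpa using Finset.card_le_univ S
    rw [hn] at this
    simp only [Nat.cast_zero] at hcon
    have : (S.card : ℝ) = 0 := by exact_mod_cast Nat.le_zero.mp this
    rw [this] at hcon
    linarith
  have hn0R : (0:ℝ) < n := by exact_mod_cast hn0
  set k : ℕ := n / 2 with hk
  have hkR : (k:ℝ) ≤ n / 2 := by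
    have := Nat.cast_div_le (α := ℝ) (m := n) (n := 2)
    simpa using this
  have hcardU : (univ : Finset V).card = n := by simp [hn]
  have hkn : k ≤ n := Nat.div_le_self n 2
  -- M.card = n - deg v
  have hMcard : M.card = n - degIn G v univ := by
    rw [hM, Finset.filter_not, Finset.card_sdiff_of_subset (Finset.filter_subset _ _), hcardU]
    rfl
  have hdegle : degIn G v univ ≤ n := by
    rw [← hcardU]; exact Finset.card_le_card (Finset.filter_subset _ _)
  have hMcardR : (M.card : ℝ) = (n : ℝ) - (degIn G v univ : ℝ) := by
    rw [hMcard, Nat.cast_sub hdegle]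
  -- construct A
  obtain ⟨S', hS'S, hS'card⟩ := Finset.exists_subset_card_eq (min_le_left S.card k)
  obtain ⟨A, hS'A, -, hAcard⟩ :=
    Finset.exists_subsuperset_card_eq (n := k) (Finset.subset_univ S')
      (hS'card ▸ min_le_right _ _) (hcardU ▸ hkn)
  -- construct B
  obtain ⟨M', hM'M, hM'card⟩ := Finset.exists_subset_card_eq (min_le_left M.card k)
  obtain ⟨B, hM'B, -, hBcard⟩ :=
    Finset.exists_subsuperset_card_eq (n := k) (Finset.subset_univ M')
      (hM'card ▸ min_le_right _ _) (hcardU ▸ hkn)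
  -- bound |A \ S|
  have hAS : ((A \ S).card : ℝ) ≤ γ * n / 2 := by
    by_cases h : S.card < k
    · have h1 : (A \ S).card ≤ (A \ S').card :=
        Finset.card_le_card (Finset.sdiff_subset_sdiff le_rfl hS'S)
      rw [Finset.card_sdiff_of_subset hS'A, hAcard, hS'card, min_eq_left h.le] at h1
      have h2 : ((A \ S).card : ℝ) ≤ (k : ℝ) - S.card := by
        calc ((A \ S).card : ℝ) ≤ ((k - S.card : ℕ) : ℝ) := by exact_mod_cast h1
          _ = (k : ℝ) - S.card := by rw [Nat.cast_sub h.le]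
      linarith
    · push_neg at h
      have : A = S' := (Finset.eq_of_subset_of_card_le hS'A
        (by rw [hAcard, hS'card, min_eq_right h])).symm
      have : A ⊆ S := this ▸ hS'S
      rw [Finset.sdiff_eq_empty_iff_subset.mpr this, Finset.card_empty,
        Nat.cast_zero]
      positivity
  -- bound |B \ M|
  have hBM : ((B \ M).card : ℝ) ≤ γ * n / 2 := by
    by_cases h : M.card < k
    · have h1 : (B \ M).card ≤ (B \ M').card :=
        Finset.card_le_card (Finset.sdiff_subset_sdiff le_rfl hM'M)
      rw [Finset.card_sdiff_of_subset hM'B, hBcard, hM'card, min_eq_left h.le] at h1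
      have h2 : ((B \ M).card : ℝ) ≤ (k : ℝ) - M.card := by
        calc ((B \ M).card : ℝ) ≤ ((k - M.card : ℕ) : ℝ) := by exact_mod_cast h1
          _ = (k : ℝ) - M.card := by rw [Nat.cast_sub h.le]
      rw [hMcardR] at h2
      linarith
    · push_neg at h
      have : B = M' := (Finset.eq_of_subset_of_card_le hM'B
        (by rw [hBcard, hM'card, min_eq_right h])).symm
      have : B ⊆ M := this ▸ hM'M
      rw [Finset.sdiff_eq_empty_iff_subset.mpr this, Finset.card_empty,
        Nat.cast_zero]
      positivity
  -- bound eCount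
  have hsplit : ∑ a ∈ A ∩ S, (degIn G a B : ℝ) + ∑ a ∈ A \ S, (degIn G a B : ℝ)
      = ∑ a ∈ A, (degIn G a B : ℝ) := by
    rw [← Finset.filter_mem_eq_inter, Finset.sdiff_eq_filter,
      Finset.sum_filter_add_sum_filter_not]
  have hdegB : ∀ a ∈ A ∩ S, (degIn G a B : ℝ) ≤ γ * n / 2 + (B \ M).card := by
    intro a ha
    have haS : a ∈ S := (Finset.mem_inter.mp ha).2
    rw [hS, Finset.mem_filter] at haS
    have hsub : B.filter (fun u => G.Adj a u) ⊆
        (M.filter fun u => G.Adj a u) ∪ (B \ M) := by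
      intro b hb
      rw [Finset.mem_filter] at hb
      by_cases hbM : b ∈ M
      · exact Finset.mem_union_left _ (Finset.mem_filter.mpr ⟨hbM, hb.2⟩)
      · exact Finset.mem_union_right _ (Finset.mem_sdiff.mpr ⟨hb.1, hbM⟩)
    have h1 : degIn G a B ≤ degIn G a M + (B \ M).card := by
      unfold degIn
      exact le_trans (Finset.card_le_card hsub) (Finset.card_union_le _ _)
    have h2 : (degIn G a B : ℝ) ≤ (degIn G a M : ℝ) + (B \ M).card := by
      exact_mod_cast h1
    linarith [haS.2]
  have hAinter : ((A ∩ S).card : ℝ) ≤ n / 2 := by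
    have : (A ∩ S).card ≤ k := hAcard ▸ Finset.card_le_card Finset.inter_subset_left
    calc ((A ∩ S).card : ℝ) ≤ (k : ℝ) := by exact_mod_cast this
      _ ≤ n / 2 := hkR
  have hBcardR : (B.card : ℝ) ≤ n / 2 := by
    rw [hBcard]; exact hkR
  have hbound : (eCount G A B : ℝ) ≤ 3 / 4 * (γ * n ^ 2) := by
    rw [eCount_eq_sum, Nat.cast_sum, ← hsplit]
    have t1 : ∑ a ∈ A ∩ S, (degIn G a B : ℝ) ≤ (A ∩ S).card * (γ * n / 2 + (B \ M).card) := by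
      calc ∑ a ∈ A ∩ S, (degIn G a B : ℝ) ≤ ∑ _a ∈ A ∩ S, (γ * n / 2 + ((B \ M).card : ℝ)) :=
            Finset.sum_le_sum hdegB
        _ = (A ∩ S).card * (γ * n / 2 + (B \ M).card) := by rw [Finset.sum_const, nsmul_eq_mul]
    have t2 : ∑ a ∈ A \ S, (degIn G a B : ℝ) ≤ (A \ S).card * B.card := by
      calc ∑ a ∈ A \ S, (degIn G a B : ℝ) ≤ ∑ _a ∈ A \ S, (B.card : ℝ) := by
            refine Finset.sum_le_sum fun a _ => ?_
            exact_mod_cast Finset.card_le_card (Finset.filter_subset _ _)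
        _ = (A \ S).card * B.card := by rw [Finset.sum_const, nsmul_eq_mul]
    have c1 : ((A ∩ S).card : ℝ) * (γ * n / 2 + (B \ M).card) ≤ n / 2 * (γ * n / 2 + γ * n / 2) := by
      apply mul_le_mul hAinter (by linarith) (by positivity) (by positivity)
    have c2 : ((A \ S).card : ℝ) * B.card ≤ (γ * n / 2) * (n / 2) := by
      apply mul_le_mul hAS hBcardR (by positivity) (by positivity)
    nlinarith
  have hAcard' : A.card = Fintype.card V / 2 := by rw [hAcard, hk, hn]
  have hBcard' : B.card = Fintype.card V / 2 := by rw [hBcard, hk, hn]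
  have := hne A B hAcard' hBcard'
  rw [hn] at this
  nlinarith
end
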